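/- arXiv:1504.04665 — 5 statements merged into one kernel-verified Lean document; each statement's English description precedes it below -/
import Mathlib

section
/- Let $h$ be a growth rate, $E$ a finite-dimensional vector space of dimension $l$, and $\varphi: E \to [-\infty,+\infty]$ a function satisfying $\varphi(0)=-\infty$, $\varphi(cx)=\varphi(x)$ for all $c\neq 0$, and $\varphi(x+y)\le\max\{\varphi(x),\varphi(y)\}$. Then $\varphi$ takes at most $l$ distinct values on $E\setminus\{0\}$. -/
/-- An abstract Lyapunov exponent on an `l`-dimensional space takes at most `l`
distinct values on `E \ {0}`. -/
theorem stmt_3 {E : Type*} [AddCommGroup E] [Module ℝ E] [FiniteDimensional ℝ E]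
    (l : ℕ) (hdim : Module.finrank ℝ E = l)
    (φ : E → EReal)
    (h0 : φ 0 = ⊥)
    (hscal : ∀ (c : ℝ) (x : E), c ≠ 0 → φ (c • x) = φ x)
    (hadd : ∀ x y : E, φ (x + y) ≤ max (φ x) (φ y)) :
    ∃ S : Finset EReal, S.card ≤ l ∧ ∀ x : E, x ≠ 0 → φ x ∈ S := by
  -- sublevel submodules
  let V : EReal → Submodule ℝ E := fun v =>
    { carrier := {x | φ x ≤ v}
      add_mem' := fun {a b} ha hb => le_trans (hadd a b) (max_le ha hb)
      zero_mem' := by simp [h0]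
      smul_mem' := by
        intro c x hx
        by_cases hc : c = 0
        · simp [hc, h0]
        · simpa [hscal c x hc] using hx }
  set A : Set EReal := φ '' {x | x ≠ 0} with hA
  have hmem : ∀ v ∈ A, ∃ x : E, x ≠ 0 ∧ φ x = v := by
    rintro v ⟨x, hx, rfl⟩; exact ⟨x, hx, rfl⟩
  have hr1 : ∀ v ∈ A, 1 ≤ Module.finrank ℝ (V v) := by
    intro v hv
    obtain ⟨x, hx, hφx⟩ := hmem v hv
    have : Nontrivial (V v) := by
      refine ⟨⟨x, le_of_eq hφx⟩, 0, ?_⟩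
      simp [Subtype.ext_iff, hx]
    exact Module.finrank_pos
  have hrl : ∀ v : EReal, Module.finrank ℝ (V v) ≤ l := by
    intro v; rw [← hdim]; exact Submodule.finrank_le _
  have hinj : Set.InjOn (fun v => Module.finrank ℝ (V v)) A := by
    have hmono : ∀ v ∈ A, ∀ w ∈ A, v < w →
        Module.finrank ℝ (V v) < Module.finrank ℝ (V w) := by
      intro v hv w hw hvw
      obtain ⟨x, hx, hφx⟩ := hmem w hw
      have hlt : V v < V w := by
        refine lt_of_le_of_ne ?_ ?_
        · intro y hy; exact le_trans hy (le_of_lt hvw)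
        · intro h
          have hxv : x ∈ V v := h ▸ (le_of_eq hφx : x ∈ V w)
          exact absurd (lt_of_le_of_lt hxv hvw).ne (by simp [hφx])
      exact Submodule.finrank_lt_finrank_of_lt hlt
    intro v hv w hw hvw
    rcases lt_trichotomy v w with h | h | h
    · exact absurd hvw (hmono v hv w hw h).ne
    · exact h
    · exact absurd hvw.symm (hmono w hw v hv h).ne
  have hfin : A.Finite := by
    have : ((fun v => Module.finrank ℝ (V v)) '' A).Finite :=
      (Set.finite_Icc 1 l).subset (by rintro _ ⟨v, hv, rfl⟩; exact ⟨hr1 v hv, hrl v⟩)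
    exact Set.Finite.of_finite_image this hinj
  refine ⟨hfin.toFinset, ?_, ?_⟩
  · have h1 : A.ncard ≤ (Set.Icc 1 l).ncard := by
      refine Set.ncard_le_ncard_of_injOn (fun v => Module.finrank ℝ (V v))
        (fun v hv => ⟨hr1 v hv, hrl v⟩) hinj (Set.finite_Icc 1 l)
    have h2 : (Set.Icc 1 l).ncard = l := by
      rw [← Nat.card_coe_set_eq, Nat.card_eq_card_toFinset]
      simp
    calc hfin.toFinset.card = A.ncard := (Set.ncard_eq_toFinset_card A hfin).symm
      _ ≤ l := h1.trans h2.le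
  · intro x hx
    simp only [Set.Finite.mem_toFinset]
    exact ⟨x, hx, rfl⟩
end

section
/- Let the linear system $x'=A(t)x$ admit a nonuniform $(h,k,\mu,\nu)$-dichotomy with constants $K, a<0\le b, \varepsilon$ and differentiable growth rates $h,k$. Suppose $f$ satisfies $\|f(t,x)\|\le\alpha\min\{h'(t)h(t)^{-1}\mu(|t|)^{-\varepsilon}, k'(t)k(t)^{-1}\nu(|t|)^{-\varepsilon}\}$ for all $t,x$. Then for each fixed solution $X(t)$ of the nonlinear equation $x'=A(t)x+f(t,x)$, the function $h^*(t)= -\int_{-\infty}^t T(t,\tau)P(\tau)f(\tau,X(\tau))d\tau + \int_t^\infty T(t,\tau)Q(\tau)f(\tau,X(\tau))d\tau$ is well-defined and satisfies $\|h^*(t)\| \le K\alpha(1/|a| + 1/b)$ for all $t\in\mathbb{R}$. -/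
/-! The hypothesis on `f` is tailored to the dichotomy: in `‖T(t,τ)P(τ)‖ ‖f(τ, X(τ))‖` the
nonuniform factors `μ(|τ|)^ε` and `μ(|τ|)^(-ε)` cancel, leaving `Kα (h τ / h t)^(-a) h'(τ)/h(τ)`.
This kernel has the primitive `(h τ / h t)^(-a) / (-a)`, which vanishes at `-∞` since `h → 0`
there, so the stable part is at most `Kα/|a|`; likewise `(k τ / k t)^(-b) / (-b)` vanishes at `+∞`
and the unstable part is at most `Kα/b`. -/

open Filter ContinuousLinearMap MeasureTheory Set Topology

theorem integrableOn_Iic_deriv_of_nonneg' {g g' : ℝ → ℝ} {a l : ℝ}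
    (hderiv : ∀ x ∈ Iic a, HasDerivAt g (g' x) x) (g'pos : ∀ x ∈ Iio a, 0 ≤ g' x)
    (hg : Tendsto g atBot (𝓝 l)) : IntegrableOn g' (Iic a) := by
  have hderiv_neg : ∀ x ∈ Ici (-a), HasDerivAt (fun x => -g (-x)) (g' (-x)) x := fun x hx => by
    simpa [Function.comp_def] using
      ((hderiv (-x) (by simpa [neg_le] using hx)).scomp x (hasDerivAt_neg' x)).fun_neg
  have hint : IntegrableOn (g' ∘ Neg.neg) (Neg.neg ⁻¹' Iio a) := by
    simpa [neg_lt, Function.comp_def] using integrableOn_Ioi_deriv_of_nonneg' hderiv_neg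
      (fun x hx => g'pos (-x) (by simpa [neg_lt] using hx)) (hg.comp tendsto_neg_atTop_atBot).neg
  exact (integrableOn_Iic_iff_integrableOn_Iio (by simp)).2 <|
    ((Measure.measurePreserving_neg volume).integrableOn_comp_preimage
      (Homeomorph.neg ℝ).measurableEmbedding).1 hint

theorem integral_Iic_of_hasDerivAt_of_nonneg' {g g' : ℝ → ℝ} {a l : ℝ}
    (hderiv : ∀ x ∈ Iic a, HasDerivAt g (g' x) x) (g'pos : ∀ x ∈ Iio a, 0 ≤ g' x)
    (hg : Tendsto g atBot (𝓝 l)) : ∫ x in Iic a, g' x = g a - l :=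
  integral_Iic_of_hasDerivAt_of_tendsto' hderiv
    (integrableOn_Iic_deriv_of_nonneg' hderiv g'pos hg) hg

theorem tendsto_rpow_div_const_div_of_tendsto_zero {α : Type*} {l : Filter α} {g : α → ℝ}
    (hg : Tendsto g l (𝓝 0)) {c : ℝ} (hc : 0 < c) (r : ℝ) :
    Tendsto (fun x => (g x / r) ^ c / c) l (𝓝 0) := by
  have hrpow := (Real.continuousAt_rpow_const 0 c (Or.inr hc.le)).tendsto.comp
    (by simpa using hg.div_const r)
  simpa [Function.comp_def, Real.zero_rpow hc.ne'] using hrpow.div_const c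

theorem tendsto_rpow_neg_div_const_div_of_tendsto_atTop {α : Type*} {l : Filter α} {g : α → ℝ}
    (hg : Tendsto g l atTop) {c : ℝ} (hc : 0 < c) {r : ℝ} (hr : 0 < r) :
    Tendsto (fun x => (g x / r) ^ (-c) / -c) l (𝓝 0) := by
  simpa using ((tendsto_rpow_neg_atTop hc).comp (hg.atTop_div_const hr)).div_const (-c)

section GrowthRate

variable {g g' : ℝ → ℝ} (hg : ∀ τ, HasDerivAt g (g' τ) τ) (hpos : ∀ τ, 0 < g τ)
  (hnn : ∀ τ, 0 ≤ g' τ)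
include hg hpos

theorem hasDerivAt_rpow_ratio_div {c : ℝ} (hc : c ≠ 0) (s τ : ℝ) :
    HasDerivAt (fun τ => (g τ / g s) ^ c / c) ((g τ / g s) ^ c * (g' τ / g τ)) τ := by
  have hτ := hpos τ
  have hs := hpos s
  refine (((hg τ).div_const (g s)).rpow_const (Or.inl (by positivity))).div_const c
    |>.congr_deriv ?_
  rw [Real.rpow_sub (by positivity), Real.rpow_one]
  field_simp

include hnn

theorem integrableOn_Iic_rpow_ratio_mul_div (hbot : Tendsto g atBot (𝓝 0)) {c : ℝ} (hc : 0 < c)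
    (s : ℝ) : IntegrableOn (fun τ => (g τ / g s) ^ c * (g' τ / g τ)) (Iic s) :=
  integrableOn_Iic_deriv_of_nonneg' (fun τ _ => hasDerivAt_rpow_ratio_div hg hpos hc.ne' s τ)
    (fun τ _ => by have := hpos τ; have := hpos s; have := hnn τ; positivity)
    (tendsto_rpow_div_const_div_of_tendsto_zero hbot hc (g s))

theorem integral_Iic_rpow_ratio_mul_div (hbot : Tendsto g atBot (𝓝 0)) {c : ℝ} (hc : 0 < c)
    (s : ℝ) : ∫ τ in Iic s, (g τ / g s) ^ c * (g' τ / g τ) = 1 / c := by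
  rw [integral_Iic_of_hasDerivAt_of_nonneg'
    (fun τ _ => hasDerivAt_rpow_ratio_div hg hpos hc.ne' s τ)
    (fun τ _ => by have := hpos τ; have := hpos s; have := hnn τ; positivity)
    (tendsto_rpow_div_const_div_of_tendsto_zero hbot hc (g s)), div_self (hpos s).ne',
    Real.one_rpow, sub_zero]

theorem integrableOn_Ioi_rpow_neg_ratio_mul_div (htop : Tendsto g atTop atTop) {c : ℝ}
    (hc : 0 < c) (s : ℝ) :
    IntegrableOn (fun τ => (g τ / g s) ^ (-c) * (g' τ / g τ)) (Ioi s) :=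
  integrableOn_Ioi_deriv_of_nonneg'
    (fun τ _ => hasDerivAt_rpow_ratio_div hg hpos (neg_ne_zero.2 hc.ne') s τ)
    (fun τ _ => by have := hpos τ; have := hpos s; have := hnn τ; positivity)
    (tendsto_rpow_neg_div_const_div_of_tendsto_atTop htop hc (hpos s))

theorem integral_Ioi_rpow_neg_ratio_mul_div (htop : Tendsto g atTop atTop) {c : ℝ}
    (hc : 0 < c) (s : ℝ) : ∫ τ in Ioi s, (g τ / g s) ^ (-c) * (g' τ / g τ) = 1 / c := by
  rw [integral_Ioi_of_hasDerivAt_of_nonneg'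
    (fun τ _ => hasDerivAt_rpow_ratio_div hg hpos (neg_ne_zero.2 hc.ne') s τ)
    (fun τ _ => by have := hpos τ; have := hpos s; have := hnn τ; positivity)
    (tendsto_rpow_neg_div_const_div_of_tendsto_atTop htop hc (hpos s)), div_self (hpos s).ne',
    Real.one_rpow]
  ring

end GrowthRate

theorem norm_apply_le_of_opNorm_le_of_norm_le {E F : Type*} [SeminormedAddCommGroup E]
    [SeminormedAddCommGroup F] [NormedSpace ℝ E] [NormedSpace ℝ F] {L : E →L[ℝ] F} {v : E}
    {K α r d m ε : ℝ} (hm : 0 < m) (hL : ‖L‖ ≤ K * r * m ^ ε) (hv : ‖v‖ ≤ α * (d * m ^ (-ε))) :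
    ‖L v‖ ≤ K * α * (r * d) :=
  calc ‖L v‖ ≤ ‖L‖ * ‖v‖ := L.le_opNorm v
    _ ≤ (K * r * m ^ ε) * (α * (d * m ^ (-ε))) :=
      mul_le_mul hL hv (norm_nonneg v) ((norm_nonneg L).trans hL)
    _ = K * α * (r * d) * (m ^ ε * (m ^ ε)⁻¹) := by rw [Real.rpow_neg hm.le]; ring
    _ = K * α * (r * d) := by rw [mul_inv_cancel₀ (Real.rpow_pos_of_pos hm ε).ne', mul_one]

theorem integrableOn_and_norm_setIntegral_le {α E : Type*} [MeasurableSpace α]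
    [NormedAddCommGroup E] [NormedSpace ℝ E] {μ : Measure α} {s : Set α} {f : α → E}
    {D : α → ℝ} (hs : MeasurableSet s) (hf : AEStronglyMeasurable f (μ.restrict s))
    (hD : IntegrableOn D s μ) (hle : ∀ x ∈ s, ‖f x‖ ≤ D x) :
    IntegrableOn f s μ ∧ ‖∫ x in s, f x ∂μ‖ ≤ ∫ x in s, D x ∂μ := by
  have hle_ae : ∀ᵐ x ∂μ.restrict s, ‖f x‖ ≤ D x := (ae_restrict_iff' hs).2 (.of_forall hle)
  exact ⟨hD.mono' hf hle_ae, norm_integral_le_of_norm_le hD hle_ae⟩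

theorem stmt_11_general {X : Type*} [NormedAddCommGroup X] [NormedSpace ℝ X]
    (h k μ ν : ℝ → ℝ) (h' k' : ℝ → ℝ)
    (hpos : ∀ t, 0 < h t)
    (hbot : Tendsto h atBot (nhds 0))
    (kpos : ∀ t, 0 < k t)
    (ktop : Tendsto k atTop atTop)
    (μpos : ∀ t, 0 < μ t)
    (νpos : ∀ t, 0 < ν t)
    (hd : ∀ t, HasDerivAt h (h' t) t) (kd : ∀ t, HasDerivAt k (k' t) t)
    (hnn : ∀ t, 0 ≤ h' t) (knn : ∀ t, 0 ≤ k' t)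
    (K a b ε α : ℝ) (ha : a < 0) (hb : 0 < b) (hα : 0 < α)
    (A : ℝ → X →L[ℝ] X)
    (T : ℝ → ℝ → X →L[ℝ] X)
    (hTcont : Continuous fun p : ℝ × ℝ => T p.1 p.2)
    (P : ℝ → X →L[ℝ] X) (hPcont : Continuous P)
    (hbound₁ : ∀ t s, s ≤ t →
      ‖T t s ∘L P s‖ ≤ K * (h t / h s) ^ a * μ |s| ^ ε)
    (hbound₂ : ∀ t s, t ≤ s →
      ‖T t s ∘L (ContinuousLinearMap.id ℝ X - P s)‖ ≤ K * (k s / k t) ^ (-b) * ν |s| ^ ε)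
    (f : ℝ → X → X) (hfcont : Continuous fun p : ℝ × X => f p.1 p.2)
    (hf : ∀ t x, ‖f t x‖ ≤
      α * min (h' t * (h t)⁻¹ * μ |t| ^ (-ε)) (k' t * (k t)⁻¹ * ν |t| ^ (-ε)))
    (Xs : ℝ → X)
    (hXs : ∀ t, HasDerivAt Xs (A t (Xs t) + f t (Xs t)) t) :
    ∀ t : ℝ,
      IntegrableOn (fun τ => (T t τ ∘L P τ) (f τ (Xs τ))) (Set.Iic t) ∧
      IntegrableOn (fun τ =>
        (T t τ ∘L (ContinuousLinearMap.id ℝ X - P τ)) (f τ (Xs τ))) (Set.Ioi t) ∧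
      ‖-(∫ τ in Set.Iic t, (T t τ ∘L P τ) (f τ (Xs τ))) +
          ∫ τ in Set.Ioi t, (T t τ ∘L (ContinuousLinearMap.id ℝ X - P τ)) (f τ (Xs τ))‖ ≤
        K * α * (1 / |a| + 1 / b) := by
  intro t
  have hXs_cont : Continuous Xs := continuous_iff_continuousAt.2 fun τ => (hXs τ).continuousAt
  have hfXs : Continuous fun τ => f τ (Xs τ) := hfcont.comp (continuous_id.prodMk hXs_cont)
  have hTt : Continuous fun τ => T t τ := hTcont.comp (continuous_const.prodMk continuous_id)
  have hP_le : ∀ τ ∈ Iic t, ‖(T t τ ∘L P τ) (f τ (Xs τ))‖ ≤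
      K * α * ((h τ / h t) ^ (-a) * (h' τ / h τ)) := fun τ hτ => by
    have hratio : (h t / h τ) ^ a = (h τ / h t) ^ (-a) := by
      have := hpos t; have := hpos τ
      rw [Real.rpow_neg (by positivity), ← Real.inv_rpow (by positivity), inv_div]
    rw [div_eq_mul_inv (h' τ), ← hratio]
    exact norm_apply_le_of_opNorm_le_of_norm_le (μpos _) (hbound₁ t τ hτ)
      ((hf τ _).trans (mul_le_mul_of_nonneg_left (min_le_left _ _) hα.le))
  have hQ_le : ∀ τ ∈ Ioi t, ‖(T t τ ∘L (ContinuousLinearMap.id ℝ X - P τ)) (f τ (Xs τ))‖ ≤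
      K * α * ((k τ / k t) ^ (-b) * (k' τ / k τ)) := fun τ hτ => by
    rw [div_eq_mul_inv (k' τ)]
    exact norm_apply_le_of_opNorm_le_of_norm_le (νpos _) (hbound₂ t τ (le_of_lt hτ))
      ((hf τ _).trans (mul_le_mul_of_nonneg_left (min_le_right _ _) hα.le))
  obtain ⟨hP_int, hP_norm⟩ := integrableOn_and_norm_setIntegral_le measurableSet_Iic
    ((hTt.clm_comp hPcont).clm_apply hfXs).aestronglyMeasurable
    ((integrableOn_Iic_rpow_ratio_mul_div hd hpos hnn hbot (neg_pos.2 ha) t).const_mul _) hP_le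
  obtain ⟨hQ_int, hQ_norm⟩ := integrableOn_and_norm_setIntegral_le measurableSet_Ioi
    ((hTt.clm_comp (continuous_const.sub hPcont)).clm_apply hfXs).aestronglyMeasurable
    ((integrableOn_Ioi_rpow_neg_ratio_mul_div kd kpos knn ktop hb t).const_mul _) hQ_le
  rw [integral_const_mul, integral_Iic_rpow_ratio_mul_div hd hpos hnn hbot (neg_pos.2 ha)]
    at hP_norm
  rw [integral_const_mul, integral_Ioi_rpow_neg_ratio_mul_div kd kpos knn ktop hb] at hQ_norm
  refine ⟨hP_int, hQ_int, ?_⟩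
  calc _ ≤ ‖∫ τ in Iic t, (T t τ ∘L P τ) (f τ (Xs τ))‖ +
        ‖∫ τ in Ioi t, (T t τ ∘L (ContinuousLinearMap.id ℝ X - P τ)) (f τ (Xs τ))‖ :=
        (norm_add_le _ _).trans_eq (by rw [norm_neg])
    _ ≤ K * α * (1 / -a) + K * α * (1 / b) := add_le_add hP_norm hQ_norm
    _ = K * α * (1 / |a| + 1 / b) := by rw [abs_of_neg ha]; ring

/-- Lemma `lezbj`: for a fixed solution `Xs` of the nonlinear system, the function
`h*(t) = -∫_{-∞}^t T(t,τ)P(τ)f(τ,Xs(τ))dτ + ∫_t^∞ T(t,τ)Q(τ)f(τ,Xs(τ))dτ`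
is well-defined and bounded by `Kα(1/|a| + 1/b)`. -/
theorem stmt_11 {X : Type*} [NormedAddCommGroup X] [NormedSpace ℝ X] [CompleteSpace X]
    (h k μ ν : ℝ → ℝ) (h' k' : ℝ → ℝ)
    (hmono : Monotone h) (hpos : ∀ t, 0 < h t) (h0 : h 0 = 1)
    (htop : Tendsto h atTop atTop) (hbot : Tendsto h atBot (nhds 0))
    (kmono : Monotone k) (kpos : ∀ t, 0 < k t) (k0 : k 0 = 1)
    (ktop : Tendsto k atTop atTop) (kbot : Tendsto k atBot (nhds 0))
    (μmono : Monotone μ) (μpos : ∀ t, 0 < μ t) (μ0 : μ 0 = 1)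
    (μtop : Tendsto μ atTop atTop) (μbot : Tendsto μ atBot (nhds 0))
    (νmono : Monotone ν) (νpos : ∀ t, 0 < ν t) (ν0 : ν 0 = 1)
    (νtop : Tendsto ν atTop atTop) (νbot : Tendsto ν atBot (nhds 0))
    (hd : ∀ t, HasDerivAt h (h' t) t) (kd : ∀ t, HasDerivAt k (k' t) t)
    (hc : Continuous h') (kc : Continuous k')
    (hnn : ∀ t, 0 ≤ h' t) (knn : ∀ t, 0 ≤ k' t)
    (K a b ε α : ℝ) (ha : a < 0) (hb : 0 < b) (hε : 0 ≤ ε) (hK : 0 < K) (hα : 0 < α)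
    (A : ℝ → X →L[ℝ] X) (hA : Continuous A)
    (T : ℝ → ℝ → X →L[ℝ] X)
    (hTid : ∀ t, T t t = ContinuousLinearMap.id ℝ X)
    (hTderiv : ∀ (s : ℝ) (x : X), ∀ t, HasDerivAt (fun r => T r s x) (A t (T t s x)) t)
    (hTcont : Continuous fun p : ℝ × ℝ => T p.1 p.2)
    (P : ℝ → X →L[ℝ] X) (hPcont : Continuous P)
    (hproj : ∀ t, P t ∘L P t = P t)
    (hcomm : ∀ t s, P t ∘L T t s = T t s ∘L P s)
    (hbound₁ : ∀ t s, s ≤ t →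
      ‖T t s ∘L P s‖ ≤ K * (h t / h s) ^ a * μ |s| ^ ε)
    (hbound₂ : ∀ t s, t ≤ s →
      ‖T t s ∘L (ContinuousLinearMap.id ℝ X - P s)‖ ≤ K * (k s / k t) ^ (-b) * ν |s| ^ ε)
    (f : ℝ → X → X) (hfcont : Continuous fun p : ℝ × X => f p.1 p.2)
    (hf : ∀ t x, ‖f t x‖ ≤
      α * min (h' t * (h t)⁻¹ * μ |t| ^ (-ε)) (k' t * (k t)⁻¹ * ν |t| ^ (-ε)))
    (Xs : ℝ → X)
    (hXs : ∀ t, HasDerivAt Xs (A t (Xs t) + f t (Xs t)) t) :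
    ∀ t : ℝ,
      IntegrableOn (fun τ => (T t τ ∘L P τ) (f τ (Xs τ))) (Set.Iic t) ∧
      IntegrableOn (fun τ =>
        (T t τ ∘L (ContinuousLinearMap.id ℝ X - P τ)) (f τ (Xs τ))) (Set.Ioi t) ∧
      ‖-(∫ τ in Set.Iic t, (T t τ ∘L P τ) (f τ (Xs τ))) +
          ∫ τ in Set.Ioi t, (T t τ ∘L (ContinuousLinearMap.id ℝ X - P τ)) (f τ (Xs τ))‖ ≤
        K * α * (1 / |a| + 1 / b) :=
  stmt_11_general h k μ ν h' k' hpos hbot kpos ktop μpos νpos hd kd hnn knn K a b ε α ha hb hα A T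
    hTcont P hPcont hbound₁ hbound₂ f hfcont hf Xs hXs
end

section
/- Suppose $H, L:\mathbb{R}\times X\to X$ are maps such that: (i) for every solution $x(t)$ of the nonlinear equation $x'=A(t)x+f(t,x)$, $t\mapsto H(t,x(t))$ solves the linear equation $x'=A(t)x$; (ii) for every solution $y(t)$ of the linear equation, $t\mapsto L(t,y(t))$ solves the nonlinear equation; (iii) $\sup_{t,x}\|H(t,x)-x\|\le M$ and $\sup_{t,y}\|L(t,y)-y\|\le M$ for some $M>0$; (iv) the only bounded solution of the linear equation is $0$ (which holds under a nonuniform $(h,k,\mu,\nu)$-dichotomy). Then $H(t, L(t,y)) = y$ for all $t\in\mathbb{R}$ and $y\in X$. -/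
/-!
For a solution `y` of the linear equation, `t ↦ H(t, L(t, y t)) - y t` is the difference of two
solutions of the linear equation, hence again one, and it is bounded by `2M`; so it vanishes.
-/

theorem hasDerivAt_sub_of_linear {E : Type*} [NormedAddCommGroup E] [NormedSpace ℝ E]
    (A : ℝ → E →L[ℝ] E) {y z : ℝ → E} (hy : ∀ t, HasDerivAt y (A t (y t)) t)
    (hz : ∀ t, HasDerivAt z (A t (z t)) t) :
    ∀ t, HasDerivAt (fun r => y r - z r) (A t (y t - z t)) t := fun t => by
  rw [map_sub]
  exact (hy t).sub (hz t)

theorem stmt_14_general {X : Type*} [NormedAddCommGroup X] [NormedSpace ℝ X]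
    (A : ℝ → X →L[ℝ] X)
    (f : ℝ → X → X)
    -- global existence and uniqueness of solutions of the linear equation
    (hlin_exist : ∀ (t₀ : ℝ) (y₀ : X), ∃ y : ℝ → X, y t₀ = y₀ ∧
      ∀ t, HasDerivAt y (A t (y t)) t)
    (H L : ℝ → X → X) (M : ℝ)
    -- (i) `H` sends solutions of the nonlinear equation to solutions of the linear one
    (hH : ∀ x : ℝ → X, (∀ t, HasDerivAt x (A t (x t) + f t (x t)) t) →
      ∀ t, HasDerivAt (fun r => H r (x r)) (A t (H t (x t))) t)
    -- (ii) `L` sends solutions of the linear equation to solutions of the nonlinear one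
    (hL : ∀ y : ℝ → X, (∀ t, HasDerivAt y (A t (y t)) t) →
      ∀ t, HasDerivAt (fun r => L r (y r)) (A t (L t (y t)) + f t (L t (y t))) t)
    -- (iii) both are boundedly close to the identity
    (hHbd : ∀ t x, ‖H t x - x‖ ≤ M) (hLbd : ∀ t y, ‖L t y - y‖ ≤ M)
    -- (iv) the only bounded solution of the linear equation is `0`
    (hbdd : ∀ z : ℝ → X, (∀ t, HasDerivAt z (A t (z t)) t) →
      (∃ C : ℝ, ∀ t, ‖z t‖ ≤ C) → ∀ t, z t = 0) :
    ∀ (t : ℝ) (y : X), H t (L t y) = y := by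
  intro t₀ y₀
  obtain ⟨y, rfl, hy⟩ := hlin_exist t₀ y₀
  have hsol := hasDerivAt_sub_of_linear A (hH _ (hL y hy)) hy
  have hbound : ∀ t, ‖H t (L t (y t)) - y t‖ ≤ 2 * M := fun t =>
    calc ‖H t (L t (y t)) - y t‖
        ≤ ‖H t (L t (y t)) - L t (y t)‖ + ‖L t (y t) - y t‖ := norm_sub_le_norm_sub_add_norm_sub _ _ _
      _ ≤ 2 * M := by linarith [hHbd t (L t (y t)), hLbd t (y t)]
  exact sub_eq_zero.mp (hbdd _ hsol ⟨2 * M, hbound⟩ t₀)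

/-- Lemma `leabc`: if `H` maps solutions of the nonlinear equation to solutions of
the linear one, `L` the other way around, both are within distance `M` of the
identity, and `0` is the only bounded solution of the linear equation, then
`H(t, L(t,y)) = y` for all `t` and `y`. -/
theorem stmt_14 {X : Type*} [NormedAddCommGroup X] [NormedSpace ℝ X] [CompleteSpace X]
    (A : ℝ → X →L[ℝ] X) (hA : Continuous A)
    (f : ℝ → X → X) (hfcont : Continuous fun p : ℝ × X => f p.1 p.2)
    -- global existence and uniqueness of solutions of the linear equation
    (hlin_exist : ∀ (t₀ : ℝ) (y₀ : X), ∃ y : ℝ → X, y t₀ = y₀ ∧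
      ∀ t, HasDerivAt y (A t (y t)) t)
    (hlin_uniq : ∀ y z : ℝ → X, (∀ t, HasDerivAt y (A t (y t)) t) →
      (∀ t, HasDerivAt z (A t (z t)) t) → (∃ t₀, y t₀ = z t₀) → y = z)
    -- global existence and uniqueness for the nonlinear equation
    (hnl_exist : ∀ (t₀ : ℝ) (x₀ : X), ∃ x : ℝ → X, x t₀ = x₀ ∧
      ∀ t, HasDerivAt x (A t (x t) + f t (x t)) t)
    (hnl_uniq : ∀ x z : ℝ → X, (∀ t, HasDerivAt x (A t (x t) + f t (x t)) t) →
      (∀ t, HasDerivAt z (A t (z t) + f t (z t)) t) → (∃ t₀, x t₀ = z t₀) → x = z)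
    (H L : ℝ → X → X) (M : ℝ) (hM : 0 < M)
    -- (i) `H` sends solutions of the nonlinear equation to solutions of the linear one
    (hH : ∀ x : ℝ → X, (∀ t, HasDerivAt x (A t (x t) + f t (x t)) t) →
      ∀ t, HasDerivAt (fun r => H r (x r)) (A t (H t (x t))) t)
    -- (ii) `L` sends solutions of the linear equation to solutions of the nonlinear one
    (hL : ∀ y : ℝ → X, (∀ t, HasDerivAt y (A t (y t)) t) →
      ∀ t, HasDerivAt (fun r => L r (y r)) (A t (L t (y t)) + f t (L t (y t))) t)
    -- (iii) both are boundedly close to the identity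
    (hHbd : ∀ t x, ‖H t x - x‖ ≤ M) (hLbd : ∀ t y, ‖L t y - y‖ ≤ M)
    -- (iv) the only bounded solution of the linear equation is `0`
    (hbdd : ∀ z : ℝ → X, (∀ t, HasDerivAt z (A t (z t)) t) →
      (∃ C : ℝ, ∀ t, ‖z t‖ ≤ C) → ∀ t, z t = 0) :
    ∀ (t : ℝ) (y : X), H t (L t y) = y :=
  stmt_14_general A f hlin_exist H L M hH hL hHbd hLbd hbdd
end

section
/- Let $H(t,x)=\langle S(t)x,x\rangle$ with $S$ as above satisfying $S'+SA+A^*S\le-\mathrm{Id}$, and suppose for the evolution operator $U(t,\tau)$ restricted to the stable cone $E_\tau^s=\{0\}\cup\{x: H(t,T(t,\tau)x)>0 \ \forall t\ge\tau\}$ one has $\|U(t,\tau)\|\le \hat l_1\mu(t)^{\hat k_1}$ for $|t-\tau|\le\hat d$ ($\hat d, \hat l_1 > 0$, $\hat k_1 \ge 0$, $\mu$ a growth rate). Then for every $x\in E_\tau^s$: $H(\tau,x) \ge \frac{\hat d}{\hat l_1^2}\mu(\tau)^{-2\hat k_1}\|x\|^2$. -/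
/-!
Along the trajectory `u r = T r τ x` the Lyapunov function `H r = ⟪S r (u r), u r⟫` decreases
at rate at least `‖u r‖²`. For `r ∈ [τ, τ + d]` the point `u r` lies in the stable cone at time
`r` and is mapped back to `x` by `T τ r`, so the local bound on `T` gives
`‖x‖ ≤ l₁ μ(τ)^k₁ ‖u r‖`. Integrating over `[τ, τ + d]` and using `H (τ + d) > 0` yields
`H τ ≥ d ‖x‖² / (l₁ μ(τ)^k₁)²`.
-/

open Filter
open scoped RealInnerProductSpace

section Lyapunov

variable {E : Type*} [NormedAddCommGroup E] [InnerProductSpace ℝ E]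

theorem hasDerivAt_inner_clm_apply_self {S : ℝ → E →L[ℝ] E} {S' : E →L[ℝ] E} {u : ℝ → E}
    {v : E} {t : ℝ} (hS : HasDerivAt S S' t) (hu : HasDerivAt u v t) :
    HasDerivAt (fun r => ⟪S r (u r), u r⟫)
      (⟪S' (u t), u t⟫ + ⟪S t v, u t⟫ + ⟪S t (u t), v⟫) t := by
  refine ((hS.clm_apply hu).inner ℝ hu).congr_deriv ?_
  rw [inner_add_left]
  ring

theorem lyapunov_sub_le_of_le_norm_sq (S S' A : ℝ → E →L[ℝ] E)
    (hS : ∀ t, HasDerivAt S (S' t) t)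
    (hineq : ∀ t x, ⟪S' t x, x⟫ + ⟪S t (A t x), x⟫ + ⟪S t x, A t x⟫ ≤ -‖x‖ ^ 2)
    {u : ℝ → E} (hu : ∀ t, HasDerivAt u (A t (u t)) t) {a b c : ℝ} (hab : a ≤ b)
    (hc : ∀ r ∈ Set.Icc a b, c ≤ ‖u r‖ ^ 2) :
    ⟪S b (u b), u b⟫ - ⟪S a (u a), u a⟫ ≤ -c * (b - a) := by
  have hH := fun t => hasDerivAt_inner_clm_apply_self (hS t) (hu t)
  refine (convex_Icc a b).image_sub_le_mul_sub_of_deriv_le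
    (fun r _ => (hH r).continuousAt.continuousWithinAt)
    (fun r _ => (hH r).differentiableAt.differentiableWithinAt)
    (fun r hr => ?_) a (Set.left_mem_Icc.2 hab) b (Set.right_mem_Icc.2 hab) hab
  rw [(hH r).deriv]
  exact (hineq r (u r)).trans (neg_le_neg (hc r (interior_subset hr)))

end Lyapunov

theorem stmt_18_general {n : ℕ}
    (S S' A : ℝ → EuclideanSpace ℝ (Fin n) →L[ℝ] EuclideanSpace ℝ (Fin n))
    (hSderiv : ∀ t, HasDerivAt S (S' t) t)
    (hineq : ∀ (t : ℝ) (x : EuclideanSpace ℝ (Fin n)),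
      (inner ℝ (S' t x) x : ℝ) + inner ℝ (S t (A t x)) x + inner ℝ (S t x) (A t x) ≤ -‖x‖ ^ 2)
    -- the evolution operator of `x' = A(t)x`
    (T : ℝ → ℝ → EuclideanSpace ℝ (Fin n) →L[ℝ] EuclideanSpace ℝ (Fin n))
    (hTid : ∀ t, T t t = ContinuousLinearMap.id ℝ _)
    (hTcoc : ∀ t s r, (T t s).comp (T s r) = T t r)
    (hTderiv : ∀ (s : ℝ) (x : EuclideanSpace ℝ (Fin n)) (t : ℝ),
      HasDerivAt (fun r => T r s x) (A t (T t s x)) t)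
    -- the stable cone
    (Es : ℝ → Set (EuclideanSpace ℝ (Fin n)))
    (hEs : ∀ τ, Es τ = {x | x = 0 ∨ ∀ t, τ ≤ t → 0 < (inner ℝ (S t (T t τ x)) (T t τ x) : ℝ)})
    -- local bound on the restriction of `T` to the stable cones
    (μ : ℝ → ℝ)
    (μpos : ∀ t, 0 < μ t)
    (d l₁ k₁ : ℝ) (hd : 0 < d) (hl₁ : 0 < l₁)
    (hU : ∀ t τ, |t - τ| ≤ d → ∀ x ∈ Es τ, ‖T t τ x‖ ≤ l₁ * μ t ^ k₁ * ‖x‖) :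
    ∀ (τ : ℝ) (x : EuclideanSpace ℝ (Fin n)), x ∈ Es τ →
      d / l₁ ^ 2 * μ τ ^ (-(2 * k₁)) * ‖x‖ ^ 2 ≤ (inner ℝ (S τ x) x : ℝ) := by
  intro τ x hx
  rw [hEs] at hx
  rcases hx with rfl | hpos
  · simp
  have hT : ∀ t r, T t r (T r τ x) = T t τ x := fun t r => by rw [← hTcoc t r τ]; rfl
  set L := l₁ * μ τ ^ k₁
  have hL : 0 < L := mul_pos hl₁ (Real.rpow_pos_of_pos (μpos τ) k₁)
  have hlow : ∀ r ∈ Set.Icc τ (τ + d), ‖x‖ ^ 2 / L ^ 2 ≤ ‖T r τ x‖ ^ 2 := by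
    intro r hr
    have hmem : T r τ x ∈ Es r := by
      rw [hEs]
      exact Or.inr fun t ht => by rw [hT]; exact hpos t (hr.1.trans ht)
    have hback : ‖x‖ ≤ L * ‖T r τ x‖ := by
      simpa [hT, hTid] using
        hU τ r (abs_le.2 ⟨by linarith [hr.2], by linarith [hr.1]⟩) _ hmem
    rw [div_le_iff₀ (by positivity), ← mul_pow, mul_comm]
    exact pow_le_pow_left₀ (norm_nonneg x) hback 2
  have hdecay := lyapunov_sub_le_of_le_norm_sq S S' A hSderiv hineq (hTderiv τ x)
    (by linarith) hlow
  have hend := hpos (τ + d) (by linarith)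
  have hconst : d / l₁ ^ 2 * μ τ ^ (-(2 * k₁)) * ‖x‖ ^ 2 = ‖x‖ ^ 2 / L ^ 2 * d := by
    rw [Real.rpow_neg (μpos τ).le, two_mul, Real.rpow_add (μpos τ), mul_pow]
    field_simp
  rw [hTid, ContinuousLinearMap.id_apply] at hdecay
  linarith

/-- Bound `H(τ,x) ≥ (d̂/l̂₁²) μ(τ)^{-2k̂₁} ‖x‖²` for `x` in the stable cone
`E_τ^s`, under the Lyapunov-function inequality and the local norm bound on the
restricted evolution operator. -/
theorem stmt_18 {n : ℕ}
    (S S' A : ℝ → EuclideanSpace ℝ (Fin n) →L[ℝ] EuclideanSpace ℝ (Fin n))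
    (hA : Continuous A)
    (hSderiv : ∀ t, HasDerivAt S (S' t) t)
    (hsym : ∀ (t : ℝ) (x y : EuclideanSpace ℝ (Fin n)),
      (inner ℝ (S t x) y : ℝ) = inner ℝ x (S t y))
    (hineq : ∀ (t : ℝ) (x : EuclideanSpace ℝ (Fin n)),
      (inner ℝ (S' t x) x : ℝ) + inner ℝ (S t (A t x)) x + inner ℝ (S t x) (A t x) ≤ -‖x‖ ^ 2)
    -- the evolution operator of `x' = A(t)x`
    (T : ℝ → ℝ → EuclideanSpace ℝ (Fin n) →L[ℝ] EuclideanSpace ℝ (Fin n))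
    (hTid : ∀ t, T t t = ContinuousLinearMap.id ℝ _)
    (hTcoc : ∀ t s r, (T t s).comp (T s r) = T t r)
    (hTderiv : ∀ (s : ℝ) (x : EuclideanSpace ℝ (Fin n)) (t : ℝ),
      HasDerivAt (fun r => T r s x) (A t (T t s x)) t)
    -- the stable cone
    (Es : ℝ → Set (EuclideanSpace ℝ (Fin n)))
    (hEs : ∀ τ, Es τ = {x | x = 0 ∨ ∀ t, τ ≤ t → 0 < (inner ℝ (S t (T t τ x)) (T t τ x) : ℝ)})
    -- local bound on the restriction of `T` to the stable cones
    (μ : ℝ → ℝ)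
    (μmono : Monotone μ) (μpos : ∀ t, 0 < μ t) (μ0 : μ 0 = 1)
    (μtop : Tendsto μ atTop atTop) (μbot : Tendsto μ atBot (nhds 0))
    (d l₁ k₁ : ℝ) (hd : 0 < d) (hl₁ : 0 < l₁) (hk₁ : 0 ≤ k₁)
    (hU : ∀ t τ, |t - τ| ≤ d → ∀ x ∈ Es τ, ‖T t τ x‖ ≤ l₁ * μ t ^ k₁ * ‖x‖) :
    ∀ (τ : ℝ) (x : EuclideanSpace ℝ (Fin n)), x ∈ Es τ →
      d / l₁ ^ 2 * μ τ ^ (-(2 * k₁)) * ‖x‖ ^ 2 ≤ (inner ℝ (S τ x) x : ℝ) :=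
  stmt_18_general S S' A hSderiv hineq T hTid hTcoc hTderiv Es hEs μ μpos d l₁ k₁ hd hl₁ hU
end

section
/- Let $P, Q$ be complementary projections on $\mathbb{R}^n$ ($P+Q=\mathrm{Id}$), and suppose for all $z$: $-H(P z)+ c_1\|Pz\|^2 + H(Qz) + c_2\|Qz\|^2 \le 0$, where $H(x)=\langle Sx,x\rangle$ for a symmetric matrix $S$, and $c_1,c_2>0$. Then $\|Pz\| \le \frac{\sqrt2+1}{2}\max\{c_1^{-1},c_2^{-1}\}\|Sz\|$ and $\|Qz\| \le \frac{\sqrt2+1}{2}\max\{c_1^{-1},c_2^{-1}\}\|Sz\|$ for all $z\in\mathbb{R}^n$. -/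
/-!
Writing `u = Pz`, `v = Qz`, symmetry of `S` turns `⟪S v, v⟫ - ⟪S u, u⟫` into
`⟪S z, v⟫ - ⟪S z, u⟫`, so Cauchy–Schwarz gives `c₁‖u‖² + c₂‖v‖² ≤ ‖S z‖ (‖u‖ + ‖v‖)`.
With `M = max c₁⁻¹ c₂⁻¹` this yields `x² + y² ≤ t (x + y)` for `x = ‖u‖`, `y = ‖v‖`,
`t = M ‖S z‖`; completing the square puts `(x, y)` in the disc of radius `t / √2` about
`(t/2, t/2)`, whence `x, y ≤ (1/2 + 1/√2) t = (√2 + 1)/2 · t`.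
-/

open scoped RealInnerProductSpace

theorem le_of_sq_add_sq_le_mul_add {x y t : ℝ} (ht : 0 ≤ t) (h : x ^ 2 + y ^ 2 ≤ t * (x + y)) :
    x ≤ (Real.sqrt 2 + 1) / 2 * t := by
  have hsqrt : Real.sqrt 2 ^ 2 = 2 := Real.sq_sqrt (by norm_num)
  have hcircle : (x - t / 2) ^ 2 ≤ (Real.sqrt 2 / 2 * t) ^ 2 := by
    nlinarith [sq_nonneg (y - t / 2)]
  have hx := (abs_le_of_sq_le_sq' hcircle (by positivity)).2
  linarith

theorem le_of_mul_sq_add_mul_sq_le {c₁ c₂ x y s : ℝ} (hc₁ : 0 < c₁) (hc₂ : 0 < c₂) (hs : 0 ≤ s)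
    (h : c₁ * x ^ 2 + c₂ * y ^ 2 ≤ s * (x + y)) :
    x ≤ (Real.sqrt 2 + 1) / 2 * max c₁⁻¹ c₂⁻¹ * s := by
  set M := max c₁⁻¹ c₂⁻¹
  have hM : 0 < M := lt_max_of_lt_left (inv_pos.mpr hc₁)
  have hc₁M : 1 ≤ c₁ * M := (inv_le_iff_one_le_mul₀' hc₁).mp (le_max_left _ _)
  have hc₂M : 1 ≤ c₂ * M := (inv_le_iff_one_le_mul₀' hc₂).mp (le_max_right _ _)
  rw [mul_assoc]
  refine le_of_sq_add_sq_le_mul_add (y := y) (by positivity) ?_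
  calc x ^ 2 + y ^ 2 ≤ M * (c₁ * x ^ 2 + c₂ * y ^ 2) := by
        nlinarith [sq_nonneg x, sq_nonneg y]
    _ ≤ M * (s * (x + y)) := mul_le_mul_of_nonneg_left h hM.le
    _ = M * s * (x + y) := by ring

variable {E : Type*} [NormedAddCommGroup E] [InnerProductSpace ℝ E]

theorem LinearMap.IsSymmetric.mul_sq_norm_add_mul_sq_norm_le {S : E →ₗ[ℝ] E} (hS : S.IsSymmetric)
    {c₁ c₂ : ℝ} {u v : E}
    (h : -⟪S u, u⟫ + c₁ * ‖u‖ ^ 2 + ⟪S v, v⟫ + c₂ * ‖v‖ ^ 2 ≤ 0) :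
    c₁ * ‖u‖ ^ 2 + c₂ * ‖v‖ ^ 2 ≤ ‖S (u + v)‖ * (‖u‖ + ‖v‖) := by
  -- the cross terms ⟪S u, v⟫ and ⟪S v, u⟫ agree by symmetry and cancel
  have hcross : ⟪S v, v⟫ - ⟪S u, u⟫ = ⟪S (u + v), v⟫ - ⟪S (u + v), u⟫ := by
    rw [map_add, inner_add_left, inner_add_left, hS u v, real_inner_comm u (S v)]
    ring
  have hu := (abs_le.mp (abs_real_inner_le_norm (S (u + v)) u)).2
  have hv := (abs_le.mp (abs_real_inner_le_norm (S (u + v)) v)).1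
  rw [mul_add]
  linarith

theorem stmt_19_general {n : ℕ}
    (P Q S : EuclideanSpace ℝ (Fin n) →L[ℝ] EuclideanSpace ℝ (Fin n))
    (hPQ : P + Q = ContinuousLinearMap.id ℝ _)
    (hsym : ∀ x y : EuclideanSpace ℝ (Fin n), (inner ℝ (S x) y : ℝ) = inner ℝ x (S y))
    (c₁ c₂ : ℝ) (hc₁ : 0 < c₁) (hc₂ : 0 < c₂)
    (hineq : ∀ z : EuclideanSpace ℝ (Fin n),
      -(inner ℝ (S (P z)) (P z) : ℝ) + c₁ * ‖P z‖ ^ 2 +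
        (inner ℝ (S (Q z)) (Q z) : ℝ) + c₂ * ‖Q z‖ ^ 2 ≤ 0) :
    ∀ z : EuclideanSpace ℝ (Fin n),
      ‖P z‖ ≤ (Real.sqrt 2 + 1) / 2 * max c₁⁻¹ c₂⁻¹ * ‖S z‖ ∧
      ‖Q z‖ ≤ (Real.sqrt 2 + 1) / 2 * max c₁⁻¹ c₂⁻¹ * ‖S z‖ := by
  intro z
  have hz : P z + Q z = z := by simpa using congr($hPQ z)
  have hS : (S : EuclideanSpace ℝ (Fin n) →ₗ[ℝ] EuclideanSpace ℝ (Fin n)).IsSymmetric := hsym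
  have key := hS.mul_sq_norm_add_mul_sq_norm_le (hineq z)
  simp only [ContinuousLinearMap.coe_coe, hz] at key
  refine ⟨le_of_mul_sq_add_mul_sq_le hc₁ hc₂ (norm_nonneg _) key, ?_⟩
  rw [max_comm]
  exact le_of_mul_sq_add_mul_sq_le (y := ‖P z‖) hc₂ hc₁ (norm_nonneg _) (by linarith)

/-- Norm estimates for complementary projections via a symmetric operator `S`:
if `-⟨S Pz, Pz⟩ + c₁‖Pz‖² + ⟨S Qz, Qz⟩ + c₂‖Qz‖² ≤ 0` for all `z`, then
`‖Pz‖, ‖Qz‖ ≤ ((√2+1)/2) max{c₁⁻¹, c₂⁻¹} ‖Sz‖`. -/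
theorem stmt_19 {n : ℕ}
    (P Q S : EuclideanSpace ℝ (Fin n) →L[ℝ] EuclideanSpace ℝ (Fin n))
    (hPQ : P + Q = ContinuousLinearMap.id ℝ _)
    (hP : P.comp P = P) (hQ : Q.comp Q = Q)
    (hsym : ∀ x y : EuclideanSpace ℝ (Fin n), (inner ℝ (S x) y : ℝ) = inner ℝ x (S y))
    (c₁ c₂ : ℝ) (hc₁ : 0 < c₁) (hc₂ : 0 < c₂)
    (hineq : ∀ z : EuclideanSpace ℝ (Fin n),
      -(inner ℝ (S (P z)) (P z) : ℝ) + c₁ * ‖P z‖ ^ 2 +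
        (inner ℝ (S (Q z)) (Q z) : ℝ) + c₂ * ‖Q z‖ ^ 2 ≤ 0) :
    ∀ z : EuclideanSpace ℝ (Fin n),
      ‖P z‖ ≤ (Real.sqrt 2 + 1) / 2 * max c₁⁻¹ c₂⁻¹ * ‖S z‖ ∧
      ‖Q z‖ ≤ (Real.sqrt 2 + 1) / 2 * max c₁⁻¹ c₂⁻¹ * ‖S z‖ :=
  stmt_19_general P Q S hPQ hsym c₁ c₂ hc₁ hc₂ hineq
end
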